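/- Let ⟨a,b⟩ be an unlocked parabolic affine ℤ²-action with a = A+α step-2. There exist positive constants ξ = ξ(A,B) and C = C(A,B) such that for any non-resonant m ∈ C₃ and any k, l ∈ ℤ satisfying |k| ≥ ξ|m| and |l| ≤ |k|^{δ(m)}, one has |Ā^kB̄^l m| ≥ C|k|^{δ(m)}, where δ(m) = 0.99/s(m). -/

import Mathlib

open MeasureTheory

namespace ParabolicKAM

/-- Points of `ℝ^d` (lifts of points of the torus `𝕋^d`). -/
abbrev Vec (d : ℕ) := Fin d → ℝ

/-- Integer vectors (Fourier frequencies). -/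
abbrev IVec (d : ℕ) := Fin d → ℤ

/-- Square integer matrices. -/
abbrev Mat (d : ℕ) := Matrix (Fin d) (Fin d) ℤ

/-- The `d`-dimensional torus. -/
abbrev Td (d : ℕ) := Fin d → AddCircle (1 : ℝ)

instance : Fact ((0 : ℝ) < 1) := ⟨one_pos⟩

/-- The real matrix with the same entries as an integer matrix. -/
def rmat {d₁ d₂ : ℕ} (A : Matrix (Fin d₁) (Fin d₂) ℤ) : Matrix (Fin d₁) (Fin d₂) ℝ :=
  A.map fun a => (a : ℝ)

/-- The affine map `x ↦ A x + α` on `ℝ^d` (a lift of the affine torus map). -/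
def affR {d : ℕ} (A : Mat d) (α : Vec d) : Vec d → Vec d :=
  fun x => (rmat A).mulVec x + α

/-- `A` is parabolic (unipotent). -/
def IsParabolic {d : ℕ} (A : Mat d) : Prop := ∃ S : ℕ, (A - 1) ^ S = 0

/-- `A` is parabolic of step exactly `S`. -/
def IsStepParabolic {d : ℕ} (A : Mat d) (S : ℕ) : Prop :=
  (A - 1) ^ S = 0 ∧ (A - 1) ^ (S - 1) ≠ 0

/-- `A` is step-2 parabolic. -/
def IsStep2 {d : ℕ} (A : Mat d) : Prop := (A - 1) ^ 2 = 0 ∧ A ≠ 1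

/-- `(α, β)` is an admissible pair of translation parts: `(A - Id) β = (B - Id) α`. -/
def TAB {d : ℕ} (A B : Mat d) (α β : Vec d) : Prop :=
  (rmat (A - 1)).mulVec β = (rmat (B - 1)).mulVec α

/-- The dual matrix `Ā = (Aᵀ)⁻¹` (acting on frequencies). -/
noncomputable def dual {d : ℕ} (A : Mat d) : Mat d := A.transpose⁻¹

/-- `Â = Ā - Id`. -/
noncomputable def hat {d : ℕ} (A : Mat d) : Mat d := dual A - 1

/-- Integer powers of a matrix. -/
noncomputable def zpowM {d : ℕ} (A : Mat d) : ℤ → Mat d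
  | Int.ofNat n => A ^ n
  | Int.negSucc n => (A ^ (n + 1))⁻¹

/-- Euclidean norm of an integer vector. -/
noncomputable def inorm {d : ℕ} (m : IVec d) : ℝ :=
  Real.sqrt (∑ i, ((m i : ℝ)) ^ 2)

/-- Euclidean norm of a real vector. -/
noncomputable def rnorm {d : ℕ} (v : Vec d) : ℝ :=
  Real.sqrt (∑ i, (v i) ^ 2)

/-- Standard inner product of integer vectors. -/
def iprod {d : ℕ} (m n : IVec d) : ℤ := ∑ i, m i * n i

/-- Euclidean operator norm of (the real matrix of) an integer matrix. -/
noncomputable def eopNorm {d : ℕ} (M : Mat d) : ℝ :=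
  ‖LinearMap.toContinuousLinearMap (Matrix.toEuclideanLin (rmat M))‖

/-- `m` is a resonant vector for the dual action of `⟨A, B⟩`. -/
def Resonant {d : ℕ} (A B : Mat d) (m : IVec d) : Prop :=
  m ≠ 0 ∧
    (∃ k l : ℤ, ¬(k = 0 ∧ l = 0) ∧ (zpowM (dual A) k * zpowM (dual B) l).mulVec m = m) ∧
    ((dual A).mulVec m ≠ m ∨ (dual B).mulVec m ≠ m)

/-- The normalization `k ∧ l = 1` for resonance pairs. -/
def NormalizedPair (k l : ℤ) : Prop :=
  (k = 1 ∧ l = 0) ∨ (k = 0 ∧ l = 1) ∨ (Int.gcd k l = 1 ∧ 0 < k)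

/-- `(k, l)` is the resonance pair associated to the resonant vector `m`. -/
def IsResPair {d : ℕ} (A B : Mat d) (m : IVec d) (k l : ℤ) : Prop :=
  NormalizedPair k l ∧ k • (hat A).mulVec m + l • (hat B).mulVec m = 0

/-- `m ∈ 𝒞₁`: degenerate frequencies, fixed by the whole dual action. -/
def InC1 {d : ℕ} (A B : Mat d) (m : IVec d) : Prop :=
  m ≠ 0 ∧ (dual A).mulVec m = m ∧ (dual B).mulVec m = m

/-- `m ∈ 𝒞₃`: nonzero, non-degenerate, non-resonant frequencies. -/
def InC3 {d : ℕ} (A B : Mat d) (m : IVec d) : Prop :=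
  m ≠ 0 ∧ ¬InC1 A B m ∧ ¬Resonant A B m

/-- `s` is the step of the frequency `m`: the least `s` with `B̂^s m = 0`. -/
def stepOf {d : ℕ} (B : Mat d) (m : IVec d) (s : ℕ) : Prop :=
  ((hat B) ^ s).mulVec m = 0 ∧ ∀ t : ℕ, ((hat B) ^ t).mulVec m = 0 → s ≤ t

/-- `m` is a lowest point on its `Ā`-orbit (for step-2 `A`, `Ā^k m = m + k Â m`). -/
def LowestOnOrbit {d : ℕ} (A : Mat d) (m : IVec d) : Prop :=
  ∀ k : ℤ, inorm m ≤ inorm (m + k • (hat A).mulVec m)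

/-- The affine map of the torus with integer linear part `M` and translation `γ`. -/
noncomputable def affT {n : ℕ} (M : Mat n) (γ : Td n) : Td n → Td n :=
  fun x i => (∑ j, M i j • x j) + γ i

/-- The projection of tori induced by an integer matrix `P`. -/
noncomputable def projT {n d : ℕ} (P : Matrix (Fin n) (Fin d) ℤ) : Td d → Td n :=
  fun x i => ∑ j, P i j • x j

/-- The point of the torus below `α ∈ ℝ^d`. -/
noncomputable def toT {d : ℕ} (α : Vec d) : Td d := fun i => (α i : AddCircle (1 : ℝ))

/-- A self-map of the torus is affine if it has the form `x ↦ M x + γ`, `M` integer. -/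
def IsAffT {n : ℕ} (f : Td n → Td n) : Prop := ∃ (M : Mat n) (γ : Td n), f = affT M γ

/-- A rank-one factor of the affine `ℤ²`-action generated by `A + α` and `B + β`: a factor
action on a quotient torus, induced by a surjective integer-linear projection intertwining
the action, whose image is contained in the group generated by a single affine map. -/
structure RankOneFactorData (d : ℕ) (A B : Mat d) (α β : Vec d) : Type where
  n : ℕ
  npos : 0 < n
  P : Matrix (Fin n) (Fin d) ℤ
  surj : Function.Surjective fun m : Fin d → ℤ => P.mulVec m
  A' : Mat n
  B' : Mat n
  α' : Td n
  β' : Td n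
  intertwineA : projT P ∘ affT A (toT α) = affT A' α' ∘ projT P
  intertwineB : projT P ∘ affT B (toT β) = affT B' β' ∘ projT P
  rankOne : ∃ c : Equiv.Perm (Td n), IsAffT (⇑c) ∧
      (∃ u : Equiv.Perm (Td n), u ∈ Subgroup.zpowers c ∧ ⇑u = affT A' α') ∧
      (∃ v : Equiv.Perm (Td n), v ∈ Subgroup.zpowers c ∧ ⇑v = affT B' β')

/-- The rank-one factor is the identity: both generators project to the identity. -/
def RankOneFactorData.IsIdentity {d : ℕ} {A B : Mat d} {α β : Vec d}
    (F : RankOneFactorData d A B α β) : Prop :=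
  affT F.A' F.α' = id ∧ affT F.B' F.β' = id

/-- The rank-one factor is genuinely parabolic: some generator projects to an affine map
with non-identity unipotent linear part. -/
def RankOneFactorData.IsGenuinelyParabolic {d : ℕ} {A B : Mat d} {α β : Vec d}
    (F : RankOneFactorData d A B α β) : Prop :=
  (IsParabolic F.A' ∧ F.A' ≠ 1) ∨ (IsParabolic F.B' ∧ F.B' ≠ 1)

/-- The linear action `⟨A, B⟩` is locked: every admissible affine action above it has a
rank-one factor that is the identity or genuinely parabolic. -/
def IsLocked {d : ℕ} (A B : Mat d) : Prop :=
  ∀ α β : Vec d, TAB A B α β →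
    ∃ F : RankOneFactorData d A B α β, F.IsIdentity ∨ F.IsGenuinelyParabolic

/-- `f : ℝ^d → ℝ^d` is `ℤ^d`-periodic. -/
def ZPeriodic {d : ℕ} (f : Vec d → Vec d) : Prop :=
  ∀ (x : Vec d) (v : IVec d), f (x + fun i => (v i : ℝ)) = f x

/-- The `C^r` norm of a map `ℝ^d → ℝ^d`. -/
noncomputable def crNorm {d : ℕ} (r : ℕ) (f : Vec d → Vec d) : ℝ :=
  ⨆ i : Fin (r + 1), ⨆ x : Vec d, ‖iteratedFDeriv ℝ (i : ℕ) f x‖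

/-- `f` has zero average over the fundamental domain. -/
def ZeroAvg {d : ℕ} (f : Vec d → Vec d) : Prop :=
  ∫ x in Set.Icc (0 : Vec d) 1, f x = 0

/-- KAM-rigidity, under volume preserving perturbations, of the affine `ℤ²`-action
generated by `a = A + α` and `b = B + β` (expressed on `ℤ^d`-periodic lifts to `ℝ^d`). -/
def KAMRigid {d : ℕ} (A B : Mat d) (α β : Vec d) : Prop :=
  ∃ σ r₀ : ℕ, σ ≤ r₀ ∧ ∃ ε : ℝ, 0 < ε ∧ ∃ C : ℝ, 0 < C ∧
    ∀ r : ℕ, r₀ ≤ r → ∀ f g : Vec d → Vec d,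
      ContDiff ℝ (⊤ : ℕ∞) f → ContDiff ℝ (⊤ : ℕ∞) g → ZPeriodic f → ZPeriodic g →
      (fun x => affR A α x + f x) ∘ (fun x => affR B β x + g x) =
        (fun x => affR B β x + g x) ∘ (fun x => affR A α x + f x) →
      MeasurePreserving (fun x => affR A α x + f x) volume volume →
      MeasurePreserving (fun x => affR B β x + g x) volume volume →
      crNorm r f ≤ ε → crNorm r g ≤ ε → ZeroAvg f → ZeroAvg g →
      ∃ h : Vec d → Vec d, ContDiff ℝ (⊤ : ℕ∞) h ∧ ZPeriodic h ∧
        crNorm (r - σ) h ≤ C * ε ∧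
        Function.Bijective (fun x : Vec d => x + h x) ∧
        MeasurePreserving (fun x : Vec d => x + h x) volume volume ∧
        (fun x : Vec d => x + h x) ∘ (fun x => affR A α x + f x) =
          affR A α ∘ (fun x : Vec d => x + h x) ∧
        (fun x : Vec d => x + h x) ∘ (fun x => affR B β x + g x) =
          affR B β ∘ (fun x : Vec d => x + h x)

/-- Ergodicity of the affine `ℤ²`-action with respect to Haar measure on the torus. -/
def JointlyErgodic {d : ℕ} (A B : Mat d) (α β : Vec d) : Prop :=
  ∀ s : Set (Td d), MeasurableSet s →
    affT A (toT α) ⁻¹' s = s → affT B (toT β) ⁻¹' s = s →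
    volume s = 0 ∨ volume sᶜ = 0

/-- The linear map whose kernel is the space `𝒯(A,B)` of admissible translation parts. -/
noncomputable def TABmap {d : ℕ} (A B : Mat d) : (Vec d × Vec d) →ₗ[ℝ] Vec d :=
  ((rmat (A - 1)).mulVecLin.comp (LinearMap.snd ℝ (Vec d) (Vec d))) -
    ((rmat (B - 1)).mulVecLin.comp (LinearMap.fst ℝ (Vec d) (Vec d)))

/-- The space `𝒯(A,B)` of admissible translation parts, as a subspace of `ℝ^d × ℝ^d`. -/
noncomputable def TABsub {d : ℕ} (A B : Mat d) : Submodule ℝ (Vec d × Vec d) :=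
  LinearMap.ker (TABmap A B)

/-- `e(m, x) = e^{2π i ⟨m, x⟩}`. -/
noncomputable def eF {d : ℕ} (m : IVec d) (x : Vec d) : ℂ :=
  Complex.exp (2 * (Real.pi : ℂ) * Complex.I * ∑ i, (m i : ℂ) * (x i : ℂ))

/-- `c : ℤ → ℤ → ℝ^d` is the family of translation parts `α_{k,l} = a^k b^l - A^k B^l`
of the elements of the affine action generated by `a = A + α` and `b = B + β`. -/
def IsTransFamily {d : ℕ} (A B : Mat d) (α β : Vec d) (c : ℤ → ℤ → Vec d) : Prop :=
  c 0 0 = 0 ∧ (∀ k l : ℤ, c (k + 1) l = α + (rmat A).mulVec (c k l)) ∧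
    ∀ k l : ℤ, c k (l + 1) = β + (rmat B).mulVec (c k l)

/-- The maximal translation factor of the action is `(γ,τ)`-simultaneously Diophantine. -/
def DiophTransFactor {d : ℕ} (γ τ : ℝ) (A B : Mat d) (α β : Vec d) : Prop :=
  ∀ m : IVec d, m ≠ 0 → (dual A).mulVec m = m → (dual B).mulVec m = m →
    γ / inorm m ^ τ < max ‖1 - eF m α‖ ‖1 - eF m β‖

/-- Every resonance of the action is `(γ,τ)`-Diophantine. -/
def DiophResonances {d : ℕ} (γ τ : ℝ) (A B : Mat d) (α β : Vec d) : Prop :=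
  ∀ (m : IVec d) (k l : ℤ), Resonant A B m → IsResPair A B m k l →
    ∀ c : ℤ → ℤ → Vec d, IsTransFamily A B α β c →
      γ / inorm m ^ τ < ‖1 - eF m (c k l)‖

/-- The affine action generated by `A + α`, `B + β` is `(γ,τ)`-Diophantine. -/
def DiophAction {d : ℕ} (γ τ : ℝ) (A B : Mat d) (α β : Vec d) : Prop :=
  DiophTransFactor γ τ A B α β ∧ DiophResonances γ τ A B α β

/-- The linearized coboundary operator `D h = h ∘ a - A h` above `a = A + α`. -/
def Dop {d : ℕ} (A : Mat d) (α : Vec d) (h : Vec d → Vec d) : Vec d → Vec d :=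
  fun x => h (affR A α x) - (rmat A).mulVec (h x)

/-- Generalized binomial coefficient `C(l, j) = l (l-1) ⋯ (l-j+1) / j!`
(a polynomial in `l` of degree `j`; the division is exact). -/
def zchoose (l : ℤ) (j : ℕ) : ℤ :=
  (∏ i ∈ Finset.range j, (l - (i : ℤ))) / (j.factorial : ℤ)


section DriftAux

variable {d : ℕ}

/-- Embedding of integer vectors into Euclidean space. -/
noncomputable def iemb (m : IVec d) : EuclideanSpace ℝ (Fin d) :=
  (WithLp.equiv 2 (Fin d → ℝ)).symm (fun i => (m i : ℝ))

lemma inorm_eq_norm (m : IVec d) : inorm m = ‖iemb m‖ := by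
  rw [EuclideanSpace.norm_eq]
  unfold inorm
  congr 1
  refine Finset.sum_congr rfl fun i _ => ?_
  simp [iemb, Real.norm_eq_abs, sq_abs]

lemma iemb_add (x y : IVec d) : iemb (x + y) = iemb x + iemb y := by
  ext i
  simp [iemb]

lemma iemb_smul (k : ℤ) (x : IVec d) : iemb (k • x) = (k : ℝ) • iemb x := by
  ext i
  simp [iemb]

lemma inorm_nonneg' (m : IVec d) : 0 ≤ inorm m := by
  rw [inorm_eq_norm]; exact norm_nonneg _

lemma inorm_add_le (x y : IVec d) : inorm (x + y) ≤ inorm x + inorm y := by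
  rw [inorm_eq_norm, inorm_eq_norm, inorm_eq_norm, iemb_add]
  exact norm_add_le _ _

lemma inorm_neg (x : IVec d) : inorm (-x) = inorm x := by
  unfold inorm
  congr 1
  refine Finset.sum_congr rfl fun i _ => ?_
  simp only [Pi.neg_apply]
  push_cast
  ring

lemma inorm_smul (k : ℤ) (x : IVec d) : inorm (k • x) = |(k : ℝ)| * inorm x := by
  rw [inorm_eq_norm, inorm_eq_norm, iemb_smul, norm_smul, Real.norm_eq_abs]

lemma sub_inorm_le (x y : IVec d) : inorm y - inorm x ≤ inorm (x + y) := by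
  have h := inorm_add_le (x + y) (-x)
  have : (x + y) + (-x) = y := by abel
  rw [this, inorm_neg] at h
  linarith

lemma one_le_inorm {m : IVec d} (hm : m ≠ 0) : 1 ≤ inorm m := by
  obtain ⟨i, hi⟩ : ∃ i, m i ≠ 0 := by
    by_contra h
    push_neg at h
    exact hm (funext h)
  have h1 : (1 : ℝ) ≤ ((m i : ℝ)) ^ 2 := by
    have : 1 ≤ |m i| := Int.one_le_abs hi
    have : (1 : ℝ) ≤ |(m i : ℝ)| := by exact_mod_cast this
    nlinarith [abs_nonneg ((m i : ℝ)), sq_abs ((m i : ℝ))]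
  have h2 : (1 : ℝ) ≤ ∑ j, ((m j : ℝ)) ^ 2 :=
    h1.trans (Finset.single_le_sum (fun j _ => sq_nonneg ((m j : ℝ))) (Finset.mem_univ i))
  calc (1 : ℝ) = Real.sqrt 1 := Real.sqrt_one.symm
  _ ≤ _ := Real.sqrt_le_sqrt h2

lemma inorm_mulVec_le (M : Mat d) (v : IVec d) :
    inorm (M.mulVec v) ≤ eopNorm M * inorm v := by
  rw [inorm_eq_norm, inorm_eq_norm]
  have key : iemb (M.mulVec v) =
      (LinearMap.toContinuousLinearMap (Matrix.toEuclideanLin (rmat M))) (iemb v) := by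
    show iemb (M.mulVec v) = (Matrix.toEuclideanLin (rmat M)) (iemb v)
    unfold iemb
    change _ = (WithLp.equiv 2 (Fin d → ℝ)).symm ((rmat M).mulVec (fun i => (v i : ℝ)))
    congr 1
    funext i
    simp only [Matrix.mulVec, dotProduct, rmat, Matrix.map_apply]
    push_cast
    rfl
  rw [key]
  exact (LinearMap.toContinuousLinearMap (Matrix.toEuclideanLin (rmat M))).le_opNorm _

lemma eopNorm_nonneg (M : Mat d) : 0 ≤ eopNorm M := norm_nonneg _

lemma zpowM_units (u : (Mat d)ˣ) (k : ℤ) : zpowM (↑u) k = (↑(u ^ k) : Mat d) := by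
  cases k with
  | ofNat n =>
    show (↑u : Mat d) ^ n = ↑(u ^ (Int.ofNat n))
    rw [Int.ofNat_eq_coe, zpow_natCast, Units.val_pow_eq_pow_val]
  | negSucc n =>
    show ((↑u : Mat d) ^ (n + 1))⁻¹ = ↑(u ^ Int.negSucc n)
    rw [zpow_negSucc, ← Units.val_pow_eq_pow_val]
    refine Matrix.inv_eq_right_inv ?_
    rw [← Units.val_mul, mul_inv_cancel, Units.val_one]

lemma commute_val_zpow {a : Mat d} {u : (Mat d)ˣ} (h : Commute a ↑u) (k : ℤ) :
    Commute a (↑(u ^ k) : Mat d) := by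
  cases k with
  | ofNat n =>
    rw [Int.ofNat_eq_coe, zpow_natCast, Units.val_pow_eq_pow_val]
    exact h.pow_right n
  | negSucc n =>
    rw [zpow_negSucc]
    refine Commute.units_inv_right ?_
    rw [Units.val_pow_eq_pow_val]
    exact h.pow_right (n + 1)

lemma pow_succ_add_pow_le {x : ℝ} (hx : 0 ≤ x) (t : ℕ) :
    x ^ (t + 1) + x ^ t ≤ (x + 1) ^ (t + 1) := by
  have h1 : x ^ (t + 1) + x ^ t = x ^ t * (x + 1) := by ring
  have h2 : x ^ t * (x + 1) ≤ (x + 1) ^ t * (x + 1) := by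
    refine mul_le_mul_of_nonneg_right ?_ (by linarith)
    exact pow_le_pow_left₀ hx (by linarith) t
  rw [h1, ← pow_succ] at *
  linarith

end DriftAux

set_option maxHeartbeats 2000000 in
/-- **Lemma (drift in `k`).** Let `⟨a,b⟩` be an unlocked parabolic affine action with
`a` step-2. There are `ξ = ξ(A,B) > 0` and `C = C(A,B) > 0` such that for any `m ∈ 𝒞₃`
and any `k, l ∈ ℤ` with `|k| ≥ ξ|m|` and `|l| ≤ |k|^{δ(m)}`, one has
`|Ā^k B̄^l m| ≥ C |k|^{δ(m)}`, where `δ(m) = 0.99/s(m)`. -/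
theorem drift_in_k (d : ℕ) (A B : Mat d) (α β : Vec d)
    (hA2 : IsStep2 A) (hBpar : IsParabolic B)
    (hcomm : A * B = B * A) (hTAB : TAB A B α β)
    (hunlocked : ¬ IsLocked A B) :
    ∃ ξ C : ℝ, 0 < ξ ∧ 0 < C ∧
      ∀ (m : IVec d) (s : ℕ), InC3 A B m → stepOf B m s →
        ∀ k l : ℤ, ξ * inorm m ≤ |(k : ℝ)| → |(l : ℝ)| ≤ |(k : ℝ)| ^ (0.99 / (s : ℝ)) →
          C * |(k : ℝ)| ^ (0.99 / (s : ℝ)) ≤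
            inorm ((zpowM (dual A) k * zpowM (dual B) l).mulVec m) := by
  classical
  obtain ⟨hA2sq, hAne⟩ := hA2
  obtain ⟨S0, hS0⟩ := hBpar
  -- Units above the transposes
  have hnilA : IsNilpotent (A.transpose - 1) := ⟨2, by
    have h : A.transpose - 1 = (A - 1).transpose := by
      rw [Matrix.transpose_sub, Matrix.transpose_one]
    rw [h, ← Matrix.transpose_pow, hA2sq, Matrix.transpose_zero]⟩
  have hnilB : IsNilpotent (B.transpose - 1) := ⟨S0, by
    have h : B.transpose - 1 = (B - 1).transpose := by
      rw [Matrix.transpose_sub, Matrix.transpose_one]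
    rw [h, ← Matrix.transpose_pow, hS0, Matrix.transpose_zero]⟩
  obtain ⟨u0A, hu0A⟩ : IsUnit A.transpose := by
    have := hnilA.isUnit_add_one
    rwa [sub_add_cancel] at this
  obtain ⟨u0B, hu0B⟩ : IsUnit B.transpose := by
    have := hnilB.isUnit_add_one
    rwa [sub_add_cancel] at this
  set uA : (Mat d)ˣ := u0A⁻¹ with huAdef
  set uB : (Mat d)ˣ := u0B⁻¹ with huBdef
  have hcA : (↑uA : Mat d) * A.transpose = 1 := by
    rw [← hu0A, huAdef, ← Units.val_mul, inv_mul_cancel, Units.val_one]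
  have hcA' : A.transpose * (↑uA : Mat d) = 1 := by
    rw [← hu0A, huAdef, ← Units.val_mul, mul_inv_cancel, Units.val_one]
  have hcB : (↑uB : Mat d) * B.transpose = 1 := by
    rw [← hu0B, huBdef, ← Units.val_mul, inv_mul_cancel, Units.val_one]
  have hcB' : B.transpose * (↑uB : Mat d) = 1 := by
    rw [← hu0B, huBdef, ← Units.val_mul, mul_inv_cancel, Units.val_one]
  have hdualA : dual A = (↑uA : Mat d) := by
    unfold dual; exact Matrix.inv_eq_right_inv hcA'
  have hdualB : dual B = (↑uB : Mat d) := by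
    unfold dual; exact Matrix.inv_eq_right_inv hcB'
  set N : Mat d := hat A with hNdef
  set Q : Mat d := hat B with hQdef
  have hNval : N = (↑uA : Mat d) - 1 := by rw [hNdef]; unfold hat; rw [hdualA]
  have hQval : Q = (↑uB : Mat d) - 1 := by rw [hQdef]; unfold hat; rw [hdualB]
  have huAval : (↑uA : Mat d) = 1 + N := by rw [hNval]; abel
  have huBval : (↑uB : Mat d) = 1 + Q := by rw [hQval]; abel
  have hcommAT : Commute (↑uA : Mat d) A.transpose := by
    show (↑uA : Mat d) * A.transpose = A.transpose * (↑uA : Mat d)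
    rw [hcA, hcA']
  have hcommBT : Commute (↑uB : Mat d) B.transpose := by
    show (↑uB : Mat d) * B.transpose = B.transpose * (↑uB : Mat d)
    rw [hcB, hcB']
  have hNuA : N = (↑uA : Mat d) * (1 - A.transpose) := by
    rw [mul_sub, mul_one, hcA, hNval]
  have hQuB2 : Q = (↑uB : Mat d) * (1 - B.transpose) := by
    rw [mul_sub, mul_one, hcB, hQval]
  -- N is square-zero
  have hAtsq : (A.transpose - 1) * (A.transpose - 1) = 0 := by
    have h := congrArg Matrix.transpose hA2sq
    rw [pow_two, Matrix.transpose_mul, Matrix.transpose_sub, Matrix.transpose_one,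
      Matrix.transpose_zero] at h
    exact h
  have h1Asq : (1 - A.transpose) * (1 - A.transpose) = 0 := by
    rw [show (1 : Mat d) - A.transpose = -(A.transpose - 1) from (neg_sub _ _).symm,
      neg_mul_neg, hAtsq]
  have hNsq : N * N = 0 := by
    have hcm : Commute (↑uA : Mat d) (1 - A.transpose) :=
      Commute.sub_right (Commute.one_right _) hcommAT
    have h2 : N ^ 2 = (↑uA : Mat d) ^ 2 * (1 - A.transpose) ^ 2 := by
      rw [hNuA, hcm.mul_pow]
    have h3 := h2
    rw [pow_two (1 - A.transpose), h1Asq, mul_zero] at h3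
    rw [← pow_two, h3]
  -- Q is nilpotent
  have hQS0 : Q ^ S0 = 0 := by
    have hcm : Commute (↑uB : Mat d) (1 - B.transpose) :=
      Commute.sub_right (Commute.one_right _) hcommBT
    have h1B : (1 - B.transpose) ^ S0 = 0 := by
      have h2 : (B.transpose - 1) ^ S0 = 0 := by
        rw [show B.transpose - 1 = (B - 1).transpose from by
          rw [Matrix.transpose_sub, Matrix.transpose_one]]
        rw [← Matrix.transpose_pow, hS0, Matrix.transpose_zero]
      rw [show (1 : Mat d) - B.transpose = -(B.transpose - 1) from (neg_sub _ _).symm,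
        neg_pow, h2, mul_zero]
    rw [hQuB2, hcm.mul_pow, h1B, mul_zero]
  have hQS : Q ^ (S0 + 1) = 0 := by rw [pow_succ, hQS0, zero_mul]
  -- commutation
  have hABt : A.transpose * B.transpose = B.transpose * A.transpose := by
    calc A.transpose * B.transpose = (B * A).transpose := (Matrix.transpose_mul B A).symm
      _ = (A * B).transpose := by rw [hcomm]
      _ = B.transpose * A.transpose := Matrix.transpose_mul A B
  have hu0AB : Commute u0A u0B := Units.ext (by
    rw [Units.val_mul, Units.val_mul, hu0A, hu0B]; exact hABt)
  have hABu : Commute uA uB := by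
    rw [huAdef, huBdef]
    exact hu0AB.inv_left.inv_right
  have hABval : Commute (↑uA : Mat d) (↑uB : Mat d) := by
    show (↑uA : Mat d) * ↑uB = ↑uB * ↑uA
    rw [← Units.val_mul, ← Units.val_mul, hABu.eq]
  have hQuA : Commute Q (↑uA : Mat d) := by
    rw [hQval]; exact Commute.sub_left hABval.symm (Commute.one_left _)
  have hQuB : Commute Q (↑uB : Mat d) := by
    rw [hQval]; exact Commute.sub_left (Commute.refl _) (Commute.one_left _)
  clear_value N Q
  -- integer-power formula for uA
  have hinvA : (↑uA⁻¹ : Mat d) = 1 - N := by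
    refine Units.inv_eq_of_mul_eq_one_right ?_
    have hexp : ((1 : Mat d) + N) * (1 - N) = 1 - N * N := by noncomm_ring
    rw [huAval, hexp, hNsq, sub_zero]
  have hcoeA : ∀ kk : ℤ, (↑(uA ^ kk) : Mat d) = 1 + kk • N := by
    intro kk
    induction kk using Int.induction_on with
    | zero => simp
    | succ i ih =>
      rw [zpow_add_one, Units.val_mul, ih, huAval]
      have hexp : ((1 : Mat d) + (i : ℤ) • N) * (1 + N) =
          1 + ((i : ℤ) + 1) • N + (i : ℤ) • (N * N) := by
        simp only [zsmul_eq_mul, Int.cast_add, Int.cast_one]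
        noncomm_ring
      rw [hexp, hNsq, smul_zero, add_zero]
    | pred i ih =>
      rw [zpow_sub_one, Units.val_mul, ih, hinvA]
      have hexp : ((1 : Mat d) + (-(i : ℤ)) • N) * (1 - N) =
          1 + (-(i : ℤ) - 1) • N - (-(i : ℤ)) • (N * N) := by
        simp only [zsmul_eq_mul, Int.cast_sub, Int.cast_neg, Int.cast_one]
        noncomm_ring
      rw [hexp, hNsq, smul_zero, sub_zero]
  -- constants
  set KQ : ℝ := eopNorm Q with hKQdef
  set KD : ℝ := eopNorm ((↑uB⁻¹ : Mat d)) with hKDdef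
  clear_value KQ KD
  have hKQ : 0 ≤ KQ := hKQdef ▸ eopNorm_nonneg Q
  have hKD : 0 ≤ KD := hKDdef ▸ eopNorm_nonneg ((↑uB⁻¹ : Mat d))
  set c : ℝ := 1 + (KD + 1) * (KQ + 1) with hcdef
  clear_value c
  have hc1 : 1 ≤ c := by nlinarith
  have hc0 : 0 < c := lt_of_lt_of_le one_pos hc1
  have hcKQ : KQ ≤ c := by nlinarith
  have hcKDQ : KD * KQ ≤ c := by nlinarith
  have hinvB : (↑uB⁻¹ : Mat d) = 1 + ((↑uB⁻¹ : Mat d) - 1) := by abel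
  have hRval : (↑uB⁻¹ : Mat d) - 1 = -((↑uB⁻¹ : Mat d) * Q) := by
    have h1 : (↑uB⁻¹ : Mat d) * (1 + Q) = 1 := by
      rw [← huBval, ← Units.val_mul, inv_mul_cancel, Units.val_one]
    rw [mul_add, mul_one] at h1
    rw [← h1]; abel
  have hQD : Commute Q (↑uB⁻¹ : Mat d) := hQuB.units_inv_right
  -- the key growth bound
  have bnd : ∀ s : ℕ, ∀ ll : ℤ, ∀ w : IVec d, (Q ^ s).mulVec w = 0 →
      inorm ((↑(uB ^ ll) : Mat d).mulVec w) ≤ c ^ s * (1 + |(ll : ℝ)|) ^ (s - 1) * inorm w := by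
    intro s
    induction s with
    | zero =>
      intro ll w hw
      have hw0 : w = 0 := by simpa using hw
      rw [hw0, Matrix.mulVec_zero]
      simp [inorm]
    | succ s ih =>
      intro ll w hw
      have hQw : (Q ^ s).mulVec (Q.mulVec w) = 0 := by
        rw [Matrix.mulVec_mulVec, ← pow_succ]
        exact hw
      have hW0 : 0 ≤ inorm w := inorm_nonneg' w
      induction ll using Int.induction_on with
      | zero =>
        simp only [zpow_zero, Units.val_one, Matrix.one_mulVec, Int.cast_zero, abs_zero,
          add_zero, Nat.add_sub_cancel, one_pow, mul_one]
        have h1 : (1 : ℝ) ≤ c ^ (s + 1) := one_le_pow₀ hc1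
        nlinarith
      | succ i ihp =>
        have hsplit : (↑(uB ^ ((i : ℤ) + 1)) : Mat d) =
            ↑(uB ^ (i : ℤ)) + ↑(uB ^ (i : ℤ)) * Q := by
          rw [zpow_add_one, Units.val_mul, huBval, mul_add, mul_one]
        rw [hsplit, Matrix.add_mulVec]
        refine le_trans (inorm_add_le _ _) ?_
        rw [← Matrix.mulVec_mulVec]
        have ht2 := ih (i : ℤ) (Q.mulVec w) hQw
        have ht1 := ihp
        have hQwle : inorm (Q.mulVec w) ≤ KQ * inorm w := by
          rw [hKQdef]; exact inorm_mulVec_le Q w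
        set x : ℝ := 1 + |((i : ℤ) : ℝ)| with hxdef
        clear_value x
        have hx0 : (0 : ℝ) ≤ x := by
          rw [hxdef]; positivity
        have hrhs : (1 : ℝ) + |(((i : ℤ) + 1 : ℤ) : ℝ)| = 1 + x := by
          rw [hxdef]
          push_cast
          rw [abs_of_nonneg (show (0:ℝ) ≤ (i : ℝ) + 1 by positivity),
            abs_of_nonneg (show (0:ℝ) ≤ (i : ℝ) by positivity)]
          ring
        rw [hrhs]
        simp only [Nat.add_sub_cancel] at ht1 ⊢
        rcases Nat.eq_zero_or_pos s with hs0 | hspos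
        · subst hs0
          have hQw0 : Q.mulVec w = 0 := by
            have := hw; rwa [pow_one] at this
          rw [hQw0, Matrix.mulVec_zero]
          simp only [pow_zero, mul_one, pow_one] at ht1 ⊢
          have hz : inorm (0 : IVec d) = 0 := by simp [inorm]
          rw [hz, add_zero]
          exact ht1
        · obtain ⟨t, rfl⟩ : ∃ t, s = t + 1 := ⟨s - 1, by omega⟩
          simp only [Nat.add_sub_cancel] at ht2
          have ht2' : inorm ((↑(uB ^ (i : ℤ)) : Mat d).mulVec (Q.mulVec w)) ≤
              c ^ (t + 1) * x ^ t * (KQ * inorm w) := by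
            refine le_trans ht2 ?_
            exact mul_le_mul_of_nonneg_left hQwle
              (mul_nonneg (pow_nonneg hc0.le _) (pow_nonneg hx0 _))
          have hkey : c ^ (t + 2) * x ^ (t + 1) + c ^ (t + 1) * x ^ t * KQ ≤
              c ^ (t + 2) * (1 + x) ^ (t + 1) := by
            have h2 : x ^ (t + 1) + x ^ t ≤ (1 + x) ^ (t + 1) := by
              rw [add_comm 1 x]; exact pow_succ_add_pow_le hx0 t
            have h2' : c ^ (t + 2) * (x ^ (t + 1) + x ^ t) ≤
                c ^ (t + 2) * (1 + x) ^ (t + 1) :=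
              mul_le_mul_of_nonneg_left h2 (pow_nonneg hc0.le _)
            have h1 : c ^ (t + 1) * x ^ t * KQ ≤ c ^ (t + 2) * x ^ t := by
              have h1' := mul_le_mul_of_nonneg_left hcKQ
                (show (0:ℝ) ≤ c ^ (t + 1) * x ^ t from
                  mul_nonneg (pow_nonneg hc0.le (t + 1)) (pow_nonneg hx0 t))
              calc c ^ (t + 1) * x ^ t * KQ = c ^ (t + 1) * x ^ t * KQ := rfl
                _ ≤ c ^ (t + 1) * x ^ t * c := h1'
                _ = c ^ (t + 2) * x ^ t := by ring
            nlinarith [h2']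
          have hmul := mul_le_mul_of_nonneg_right hkey hW0
          nlinarith [ht1, ht2', hmul]
      | pred i ihn =>
        have hsplit : (↑(uB ^ (-(i : ℤ) - 1)) : Mat d) =
            ↑(uB ^ (-(i : ℤ))) + ↑(uB ^ (-(i : ℤ))) * ((↑uB⁻¹ : Mat d) - 1) := by
          rw [zpow_sub_one, Units.val_mul]
          nth_rewrite 1 [hinvB]
          rw [mul_add, mul_one]
        rw [hsplit, Matrix.add_mulVec]
        refine le_trans (inorm_add_le _ _) ?_
        rw [← Matrix.mulVec_mulVec]
        have hRw : ((↑uB⁻¹ : Mat d) - 1).mulVec w =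
            -((↑uB⁻¹ : Mat d).mulVec (Q.mulVec w)) := by
          rw [hRval, Matrix.neg_mulVec, Matrix.mulVec_mulVec]
        have hRker : (Q ^ s).mulVec (((↑uB⁻¹ : Mat d) - 1).mulVec w) = 0 := by
          rw [hRw, Matrix.mulVec_neg, Matrix.mulVec_mulVec, Matrix.mulVec_mulVec,
            (hQD.pow_left s).eq, mul_assoc, ← pow_succ, ← Matrix.mulVec_mulVec, hw,
            Matrix.mulVec_zero, neg_zero]
        have ht2 := ih (-(i : ℤ)) _ hRker
        have ht1 := ihn
        have hRwle : inorm (((↑uB⁻¹ : Mat d) - 1).mulVec w) ≤ KD * (KQ * inorm w) := by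
          rw [hRw, inorm_neg, hKQdef, hKDdef]
          refine le_trans (inorm_mulVec_le _ _) ?_
          exact mul_le_mul_of_nonneg_left (inorm_mulVec_le Q w) (eopNorm_nonneg _)
        set x : ℝ := 1 + |((-(i : ℤ) : ℤ) : ℝ)| with hxdef
        clear_value x
        have hx0 : (0 : ℝ) ≤ x := by
          rw [hxdef]; positivity
        have hrhs : (1 : ℝ) + |((-(i : ℤ) - 1 : ℤ) : ℝ)| = 1 + x := by
          rw [hxdef]
          push_cast
          rw [abs_of_nonpos (show -(i:ℝ) - 1 ≤ 0 by
              have := Nat.cast_nonneg (α := ℝ) i; linarith),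
            abs_of_nonpos (show -(i:ℝ) ≤ 0 by
              have := Nat.cast_nonneg (α := ℝ) i; linarith)]
          ring
        rw [hrhs]
        simp only [Nat.add_sub_cancel] at ht1 ⊢
        rcases Nat.eq_zero_or_pos s with hs0 | hspos
        · subst hs0
          have hQw0 : Q.mulVec w = 0 := by
            have := hw; rwa [pow_one] at this
          have hRw0 : ((↑uB⁻¹ : Mat d) - 1).mulVec w = 0 := by
            rw [hRw, hQw0, Matrix.mulVec_zero, neg_zero]
          rw [hRw0, Matrix.mulVec_zero]
          simp only [pow_zero, mul_one, pow_one] at ht1 ⊢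
          have hz : inorm (0 : IVec d) = 0 := by simp [inorm]
          rw [hz, add_zero]
          exact ht1
        · obtain ⟨t, rfl⟩ : ∃ t, s = t + 1 := ⟨s - 1, by omega⟩
          simp only [Nat.add_sub_cancel] at ht2
          have ht2' : inorm ((↑(uB ^ (-(i : ℤ))) : Mat d).mulVec
              (((↑uB⁻¹ : Mat d) - 1).mulVec w)) ≤
              c ^ (t + 1) * x ^ t * (KD * (KQ * inorm w)) := by
            refine le_trans ht2 ?_
            exact mul_le_mul_of_nonneg_left hRwle
              (mul_nonneg (pow_nonneg hc0.le _) (pow_nonneg hx0 _))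
          have hkey : c ^ (t + 2) * x ^ (t + 1) + c ^ (t + 1) * x ^ t * (KD * KQ) ≤
              c ^ (t + 2) * (1 + x) ^ (t + 1) := by
            have h2 : x ^ (t + 1) + x ^ t ≤ (1 + x) ^ (t + 1) := by
              rw [add_comm 1 x]; exact pow_succ_add_pow_le hx0 t
            have h2' : c ^ (t + 2) * (x ^ (t + 1) + x ^ t) ≤
                c ^ (t + 2) * (1 + x) ^ (t + 1) :=
              mul_le_mul_of_nonneg_left h2 (pow_nonneg hc0.le _)
            have h1 : c ^ (t + 1) * x ^ t * (KD * KQ) ≤ c ^ (t + 2) * x ^ t := by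
              have h1' := mul_le_mul_of_nonneg_left hcKDQ
                (show (0:ℝ) ≤ c ^ (t + 1) * x ^ t from
                  mul_nonneg (pow_nonneg hc0.le (t + 1)) (pow_nonneg hx0 t))
              calc c ^ (t + 1) * x ^ t * (KD * KQ)
                  ≤ c ^ (t + 1) * x ^ t * c := h1'
                _ = c ^ (t + 2) * x ^ t := by ring
            nlinarith [h2']
          have hmul := mul_le_mul_of_nonneg_right hkey hW0
          nlinarith [ht1, ht2', hmul]
  -- final constants
  refine ⟨2, ((2:ℝ) ^ (S0 + 2) * c ^ (S0 + 1))⁻¹, by norm_num,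
    inv_pos.mpr (mul_pos (pow_pos two_pos _) (pow_pos hc0 _)), ?_⟩
  intro m s hm3 hstep k l hk hl
  obtain ⟨hm0, hmC1, hmRes⟩ := hm3
  obtain ⟨hstep1, hstep2⟩ := hstep
  rw [← hQdef] at hstep1 hstep2
  -- the step is between 1 and S0 + 1
  have hsle : s ≤ S0 + 1 := hstep2 _ (by rw [hQS, Matrix.zero_mulVec])
  have hs1 : 1 ≤ s := by
    rcases Nat.eq_zero_or_pos s with h0 | h
    · exfalso
      apply hm0
      have := hstep1
      rwa [h0, pow_zero, Matrix.one_mulVec] at this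
    · exact h
  -- N m ≠ 0
  have hNm : N.mulVec m ≠ 0 := by
    intro h0
    apply hmRes
    have hAm : (dual A).mulVec m = m := by
      have hdA : dual A = N + 1 := by rw [hdualA, hNval]; abel
      rw [hdA, Matrix.add_mulVec, Matrix.one_mulVec, h0, zero_add]
    have hBm : (dual B).mulVec m ≠ m := fun hB => hmC1 ⟨hm0, hAm, hB⟩
    refine ⟨hm0, ⟨1, 0, by simp, ?_⟩, Or.inr hBm⟩
    rw [hdualA, hdualB, zpowM_units, zpowM_units, zpow_one, zpow_zero, Units.val_one,
      mul_one, ← hdualA]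
    exact hAm
  have h1N : 1 ≤ inorm (N.mulVec m) := one_le_inorm hNm
  have h1m : 1 ≤ inorm m := one_le_inorm hm0
  have hk2 : (2:ℝ) ≤ |(k:ℝ)| := by nlinarith
  have hk1 : (1:ℝ) ≤ |(k:ℝ)| := by linarith
  have hk0 : (0:ℝ) < |(k:ℝ)| := by linarith
  -- identify the vector
  set W : IVec d := (zpowM (dual A) k * zpowM (dual B) l).mulVec m with hWdef
  clear_value W
  have hWrw : W = ((↑(uB ^ l) : Mat d) * ↑(uA ^ k)).mulVec m := by
    rw [hWdef, hdualA, hdualB, zpowM_units, zpowM_units]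
    congr 1
    rw [← Units.val_mul, ← Units.val_mul, (hABu.zpow_zpow k l).eq]
  set v : IVec d := m + k • N.mulVec m with hvdef
  clear_value v
  have hvA : (↑(uA ^ k) : Mat d).mulVec m = v := by
    rw [hcoeA k, Matrix.add_mulVec, Matrix.one_mulVec, Matrix.smul_mulVec, hvdef]
  have hQsW : (Q ^ s).mulVec W = 0 := by
    have hcomX : Commute (Q ^ s) ((↑(uB ^ l) : Mat d) * ↑(uA ^ k)) :=
      (((commute_val_zpow hQuB l).mul_right (commute_val_zpow hQuA k)).pow_left s)
    rw [hWrw, Matrix.mulVec_mulVec, hcomX.eq, ← Matrix.mulVec_mulVec, hstep1,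
      Matrix.mulVec_zero]
  have hvW : (↑(uB ^ (-l)) : Mat d).mulVec W = v := by
    have huni : uB ^ (-l) * uB ^ l = 1 := by rw [← zpow_add]; simp
    rw [hWrw, Matrix.mulVec_mulVec, ← mul_assoc, ← Units.val_mul, huni, Units.val_one,
      one_mul, hvA]
  have hbnd := bnd s (-l) W hQsW
  rw [hvW] at hbnd
  have habs_neg : |((-l : ℤ) : ℝ)| = |(l:ℝ)| := by push_cast; rw [abs_neg]
  rw [habs_neg] at hbnd
  -- lower bound for v
  have hlow : |(k:ℝ)| / 2 ≤ inorm v := by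
    have h := sub_inorm_le m (k • N.mulVec m)
    rw [inorm_smul] at h
    have h2 : |(k:ℝ)| ≤ |(k:ℝ)| * inorm (N.mulVec m) :=
      le_mul_of_one_le_right (abs_nonneg _) h1N
    rw [hvdef]
    nlinarith
  -- numeric endgame
  set δ : ℝ := 0.99 / (s:ℝ) with hδdef
  set x : ℝ := 1 + |(l:ℝ)| with hxdef
  clear_value δ x
  have hδ0 : 0 ≤ δ := by rw [hδdef]; positivity
  have hkδ1 : 1 ≤ |(k:ℝ)| ^ δ := by
    calc (1:ℝ) = |(k:ℝ)| ^ (0:ℝ) := (Real.rpow_zero _).symm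
      _ ≤ _ := Real.rpow_le_rpow_of_exponent_le hk1 hδ0
  have hxle : x ≤ 2 * |(k:ℝ)| ^ δ := by rw [hxdef]; linarith
  have hx0 : (0:ℝ) ≤ x := by rw [hxdef]; positivity
  have hDpos : 0 < c ^ s * x ^ (s - 1) := by
    have hx1 : (0:ℝ) < x := by rw [hxdef]; positivity
    exact mul_pos (pow_pos hc0 _) (pow_pos hx1 _)
  have hxpow : x ^ (s - 1) ≤ 2 ^ (S0 + 1) * |(k:ℝ)| ^ (δ * ((s - 1 : ℕ) : ℝ)) := by
    calc x ^ (s - 1) ≤ (2 * |(k:ℝ)| ^ δ) ^ (s - 1) := pow_le_pow_left₀ hx0 hxle _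
      _ = 2 ^ (s - 1) * (|(k:ℝ)| ^ δ) ^ (s - 1) := mul_pow _ _ _
      _ ≤ 2 ^ (S0 + 1) * (|(k:ℝ)| ^ δ) ^ (s - 1) := by
          refine mul_le_mul_of_nonneg_right ?_ (by positivity)
          exact pow_le_pow_right₀ (by norm_num) (by omega)
      _ = 2 ^ (S0 + 1) * |(k:ℝ)| ^ (δ * ((s - 1 : ℕ) : ℝ)) := by
          rw [Real.rpow_mul (abs_nonneg _), Real.rpow_natCast]
  have hcpow : c ^ s ≤ c ^ (S0 + 1) := pow_le_pow_right₀ hc1 hsle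
  have hsum : δ + δ * ((s - 1 : ℕ) : ℝ) = 0.99 := by
    have hcast : ((s - 1 : ℕ) : ℝ) = (s:ℝ) - 1 := by
      rw [Nat.cast_sub hs1, Nat.cast_one]
    have hsne : (s:ℝ) ≠ 0 := Nat.cast_ne_zero.mpr (by omega)
    rw [hcast, hδdef]
    field_simp
    ring
  have hfinal : ((2:ℝ) ^ (S0 + 2) * c ^ (S0 + 1))⁻¹ * |(k:ℝ)| ^ δ * (c ^ s * x ^ (s - 1)) ≤
      |(k:ℝ)| / 2 := by
    have hCnn : (0:ℝ) ≤ ((2:ℝ) ^ (S0 + 2) * c ^ (S0 + 1))⁻¹ * |(k:ℝ)| ^ δ :=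
      mul_nonneg (inv_nonneg.mpr (mul_nonneg (by positivity) (pow_nonneg hc0.le _)))
        (Real.rpow_nonneg (abs_nonneg _) _)
    calc ((2:ℝ) ^ (S0 + 2) * c ^ (S0 + 1))⁻¹ * |(k:ℝ)| ^ δ * (c ^ s * x ^ (s - 1)) ≤
        ((2:ℝ) ^ (S0 + 2) * c ^ (S0 + 1))⁻¹ * |(k:ℝ)| ^ δ *
          (c ^ (S0 + 1) * (2 ^ (S0 + 1) * |(k:ℝ)| ^ (δ * ((s - 1 : ℕ) : ℝ)))) := by
          refine mul_le_mul_of_nonneg_left ?_ hCnn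
          refine mul_le_mul hcpow hxpow (pow_nonneg hx0 _) (pow_nonneg hc0.le _)
      _ = (1/2) * (|(k:ℝ)| ^ δ * |(k:ℝ)| ^ (δ * ((s - 1 : ℕ) : ℝ))) := by
          have hc0' : c ^ (S0 + 1) ≠ 0 := (pow_pos hc0 _).ne'
          have h2' : ((2:ℝ)) ^ (S0 + 2) ≠ 0 := by positivity
          field_simp
          ring
      _ = (1/2) * |(k:ℝ)| ^ (δ + δ * ((s - 1 : ℕ) : ℝ)) := by
          rw [← Real.rpow_add hk0]
      _ = (1/2) * |(k:ℝ)| ^ (0.99:ℝ) := by rw [hsum]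
      _ ≤ (1/2) * |(k:ℝ)| ^ (1:ℝ) := by
          refine mul_le_mul_of_nonneg_left ?_ (by norm_num)
          exact Real.rpow_le_rpow_of_exponent_le hk1 (by norm_num)
      _ = |(k:ℝ)| / 2 := by rw [Real.rpow_one]; ring
  have hchain : ((2:ℝ) ^ (S0 + 2) * c ^ (S0 + 1))⁻¹ * |(k:ℝ)| ^ δ * (c ^ s * x ^ (s - 1)) ≤
      inorm W * (c ^ s * x ^ (s - 1)) := by
    have : |(k:ℝ)| / 2 ≤ c ^ s * x ^ (s - 1) * inorm W := le_trans hlow hbnd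
    nlinarith
  exact le_of_mul_le_mul_right hchain hDpos


end ParabolicKAM
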